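/- arXiv:2106.10520 — 3 statements merged into one kernel-verified Lean document; each statement's English description precedes it below -/
import Mathlib

section
/- Let A ∈ R^{n×d}, S ∈ R^{n×τ}, b ∈ Range(A), and H a symmetric positive definite d×d matrix. Then the optimization problem min_x (1/2)‖x‖_H² subject to SᵀAx = Sᵀb has a unique solution given by x* = H⁻¹AᵀS(SᵀAH⁻¹AᵀS)†Sᵀb. -/
/-!
Write `C = SᵀA`, `M = C H⁻¹ Cᵀ` and `b = Ay`. The identity `M N M = M` upgrades to
`M N C = C`: the matrix `D = (1 - M N) C` satisfies `D H⁻¹ Dᵀ = (1 - M N) M (1 - M N)ᵀ = 0`,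
which forces `D = 0` because `H⁻¹` is positive definite. Hence `C x* = M N C y = C y = Sᵀ b`.
Moreover `H x* = Cᵀ (N Sᵀ b)` is orthogonal to `ker C`, so every other feasible `x` satisfies
`‖x‖_H² = ‖x*‖_H² + ‖x - x*‖_H² > ‖x*‖_H²`.
-/

open Matrix

/-- `N` is the Moore–Penrose pseudoinverse of `M`. -/
def IsMoorePenrose {m n : ℕ} (M : Matrix (Fin m) (Fin n) ℝ)
    (N : Matrix (Fin n) (Fin m) ℝ) : Prop :=
  M * N * M = M ∧ N * M * N = N ∧ (M * N)ᵀ = M * N ∧ (N * M)ᵀ = N * M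

namespace Matrix

variable {k m R : Type*} [Fintype k] [Fintype m]

section Ring

variable [Ring R] [PartialOrder R] [StarRing R]

theorem PosDef.eq_zero_of_mul_mul_conjTranspose_eq_zero {G : Matrix k k R} (hG : G.PosDef)
    {D : Matrix m k R} (h : D * G * Dᴴ = 0) : D = 0 := by
  refine conjTranspose_eq_zero.mp <| ext_iff_mulVec.mpr fun z => ?_
  rw [zero_mulVec]
  by_contra hz
  have := hG.dotProduct_mulVec_pos hz
  rw [star_mulVec, conjTranspose_conjTranspose, dotProduct_mulVec, vecMul_vecMul,
    ← dotProduct_mulVec, mulVec_mulVec, h, zero_mulVec, dotProduct_zero] at this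
  exact this.false

variable [DecidableEq m]

theorem PosDef.mul_mul_conjTranspose_mul_mul_eq {G : Matrix k k R} (hG : G.PosDef)
    (C : Matrix m k R) {N : Matrix m m R}
    (hN : C * G * Cᴴ * N * (C * G * Cᴴ) = C * G * Cᴴ) : C * G * Cᴴ * N * C = C := by
  set M := C * G * Cᴴ
  have hD : (1 - M * N) * C * G * ((1 - M * N) * C)ᴴ = 0 := by
    calc (1 - M * N) * C * G * ((1 - M * N) * C)ᴴ = ((1 - M * N) * M) * (1 - M * N)ᴴ := by
          simp only [conjTranspose_mul, M, Matrix.mul_assoc]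
      _ = 0 := by rw [Matrix.sub_mul, Matrix.one_mul, hN, sub_self, Matrix.zero_mul]
  have := hG.eq_zero_of_mul_mul_conjTranspose_eq_zero hD
  rwa [Matrix.sub_mul, Matrix.one_mul, sub_eq_zero, eq_comm] at this

end Ring

theorem PosDef.mulVec_dotProduct_lt_of_mulVec_eq {H : Matrix k k ℝ} (hH : H.PosDef)
    {C : Matrix m k ℝ} {x₀ x : k → ℝ} {μ : m → ℝ} (hx₀ : H *ᵥ x₀ = Cᵀ *ᵥ μ)
    (hx : C *ᵥ x = C *ᵥ x₀) (hne : x ≠ x₀) : H *ᵥ x₀ ⬝ᵥ x₀ < H *ᵥ x ⬝ᵥ x := by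
  obtain ⟨w, rfl⟩ : ∃ w, x = x₀ + w := ⟨x - x₀, by abel⟩
  have hCw : C *ᵥ w = 0 := by simpa [mulVec_add] using hx
  have hw : w ≠ 0 := by simpa using hne
  have hcross : H *ᵥ x₀ ⬝ᵥ w = 0 := by
    rw [hx₀, mulVec_transpose, ← dotProduct_mulVec, hCw, dotProduct_zero]
  have hsymm : H *ᵥ w ⬝ᵥ x₀ = H *ᵥ x₀ ⬝ᵥ w := by
    rw [dotProduct_comm, dotProduct_mulVec, ← mulVec_transpose,
      (isHermitian_iff_isSymm.mp hH.isHermitian).eq]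
  have hpos : 0 < H *ᵥ w ⬝ᵥ w := by
    simpa [dotProduct_comm] using hH.dotProduct_mulVec_pos hw
  calc H *ᵥ x₀ ⬝ᵥ x₀ < H *ᵥ x₀ ⬝ᵥ x₀ + H *ᵥ w ⬝ᵥ w := by linarith
    _ = H *ᵥ (x₀ + w) ⬝ᵥ (x₀ + w) := by
      rw [mulVec_add, add_dotProduct, dotProduct_add, dotProduct_add, hsymm, hcross]; ring

end Matrix

/-- Sketch-and-project lemma: for `A ∈ ℝ^{n×d}`, `S ∈ ℝ^{n×τ}`, `b ∈ Range(A)` and `H`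
symmetric positive definite, the problem `min (1/2)‖x‖_H²` s.t. `SᵀAx = Sᵀb` has the unique
solution `x* = H⁻¹AᵀS(SᵀAH⁻¹AᵀS)†Sᵀb`. -/
theorem sketch_and_project_solution {n d τ : ℕ}
    (A : Matrix (Fin n) (Fin d) ℝ) (S : Matrix (Fin n) (Fin τ) ℝ)
    (b : Fin n → ℝ) (hb : b ∈ LinearMap.range (Matrix.mulVecLin A))
    (H : Matrix (Fin d) (Fin d) ℝ) (hH : H.PosDef)
    (N : Matrix (Fin τ) (Fin τ) ℝ)
    (hN : IsMoorePenrose (Sᵀ * A * H⁻¹ * Aᵀ * S) N)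
    (xstar : Fin d → ℝ)
    (hxstar : xstar = (H⁻¹ * Aᵀ * S * N * Sᵀ).mulVec b) :
    ((Sᵀ * A).mulVec xstar = Sᵀ.mulVec b) ∧
      ∀ x : Fin d → ℝ, (Sᵀ * A).mulVec x = Sᵀ.mulVec b → x ≠ xstar →
        (1 / 2) * (H.mulVec xstar ⬝ᵥ xstar) < (1 / 2) * (H.mulVec x ⬝ᵥ x) := by
  obtain ⟨y, rfl⟩ : ∃ y, A *ᵥ y = b := hb
  set C := Sᵀ * A
  have hCt : Cᵀ = Aᵀ * S := by simp [C, transpose_mul]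
  have hMNC : C * H⁻¹ * Cᵀ * N * C = C := by
    refine hH.inv.mul_mul_conjTranspose_mul_mul_eq C ?_
    simpa [hCt, C, Matrix.mul_assoc] using hN.1
  have hfeas : C *ᵥ xstar = Sᵀ *ᵥ (A *ᵥ y) :=
    calc C *ᵥ xstar = (C * H⁻¹ * Cᵀ * N * C) *ᵥ y := by
          simp only [hxstar, mulVec_mulVec, hCt, C, Matrix.mul_assoc]
      _ = Sᵀ *ᵥ (A *ᵥ y) := by rw [hMNC, mulVec_mulVec]
  have hHx : H *ᵥ xstar = Cᵀ *ᵥ ((N * Sᵀ) *ᵥ (A *ᵥ y)) := by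
    simp only [hxstar, mulVec_mulVec, hCt, Matrix.mul_assoc,
      mul_nonsing_inv_cancel_left _ _ ((isUnit_iff_isUnit_det H).mp hH.isUnit)]
  refine ⟨hfeas, fun x hx hne => ?_⟩
  have := hH.mulVec_dotProduct_lt_of_mulVec_eq hHx (hx.trans hfeas.symm) hne
  linarith
end

section
/- Let H_j be a d×d symmetric positive definite matrix, c_j, ŵ, α̂_1,…,α̂_n ∈ R^d. The problem of minimizing (1/2)∑_{i=1}^n ‖α_i − α̂_i‖² + (1/2)‖w − ŵ‖²_{H_j} subject to H_j(w − ŵ) − α_j = c_j has a unique solution: w = ŵ + (I + H_j)⁻¹(c_j + α̂_j), α_j = α̂_j − (I + H_j)⁻¹(c_j + α̂_j), and α_i = α̂_i for i ≠ j. -/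
open Matrix

/-! Write `u = w* − ŵ`. The closed form says `(I + H)u = c + α̂_j`, which is exactly feasibility of
`(w*, α*)`, and it also makes `α*_j − α̂_j = −u`. For a feasible `(w, α)` put `δ = w − w*`; the
constraint forces `α_j − α*_j = Hδ`. Expanding the objective around `(w*, α*)`, the two first-order
terms are `−⟨u, Hδ⟩` and `⟨Hu, δ⟩`, which cancel because `H` is symmetric, leaving
`f(w, α) = f(w*, α*) + ½∑ᵢ‖αᵢ − α*ᵢ‖² + ½‖δ‖²_H`, and the remainder is positive unless
`(w, α) = (w*, α*)` since `H` is positive definite. -/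

namespace Matrix

section CommRing

variable {R m ι : Type*} [CommRing R] [Fintype m]

theorem IsSymm.mulVec_dotProduct_comm {H : Matrix m m R} (hH : H.IsSymm) (x y : m → R) :
    H *ᵥ x ⬝ᵥ y = H *ᵥ y ⬝ᵥ x := by
  rw [dotProduct_comm, dotProduct_mulVec, ← mulVec_transpose, hH.eq]

theorem IsSymm.mulVec_add_dotProduct_add {H : Matrix m m R} (hH : H.IsSymm) (x y : m → R) :
    H *ᵥ (x + y) ⬝ᵥ (x + y) = H *ᵥ x ⬝ᵥ x + 2 * (H *ᵥ x ⬝ᵥ y) + H *ᵥ y ⬝ᵥ y := by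
  rw [mulVec_add, add_dotProduct, dotProduct_add, dotProduct_add,
    hH.mulVec_dotProduct_comm y x]
  ring

theorem add_dotProduct_self_add (x y : m → R) :
    (x + y) ⬝ᵥ (x + y) = x ⬝ᵥ x + 2 * (x ⬝ᵥ y) + y ⬝ᵥ y := by
  rw [add_dotProduct, dotProduct_add, dotProduct_add, dotProduct_comm y x]
  ring

theorem sum_add_dotProduct_self_add [Fintype ι] (x y : ι → m → R) :
    ∑ i, (x i + y i) ⬝ᵥ (x i + y i) =
      ∑ i, x i ⬝ᵥ x i + 2 * ∑ i, x i ⬝ᵥ y i + ∑ i, y i ⬝ᵥ y i := by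
  simp only [add_dotProduct_self_add, Finset.sum_add_distrib, Finset.mul_sum]

theorem mulVec_sub_sub_eq_of_isUnit_det_one_add [DecidableEq m] {H : Matrix m m R}
    (hH : IsUnit (1 + H).det) (c a : m → R) :
    H *ᵥ ((1 + H)⁻¹ *ᵥ (c + a)) - (a - (1 + H)⁻¹ *ᵥ (c + a)) = c := by
  have hu : (1 + H) *ᵥ ((1 + H)⁻¹ *ᵥ (c + a)) = c + a := by
    rw [mulVec_mulVec, mul_nonsing_inv _ hH, one_mulVec]
  rw [add_mulVec, one_mulVec] at hu
  linear_combination hu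

end CommRing

section Real

variable {m ι : Type*} [Fintype m] [Fintype ι]

theorem sum_dotProduct_self_add_mulVec_dotProduct_pos {H : Matrix m m ℝ} (hH : H.PosDef)
    {γ : ι → m → ℝ} {δ : m → ℝ} (h : δ ≠ 0 ∨ γ ≠ 0) :
    0 < ∑ i, γ i ⬝ᵥ γ i + H *ᵥ δ ⬝ᵥ δ := by
  have hγ : ∀ i, 0 ≤ γ i ⬝ᵥ γ i := fun i => by simpa using dotProduct_star_self_nonneg (γ i)
  have hδ : 0 ≤ H *ᵥ δ ⬝ᵥ δ := by
    simpa [dotProduct_comm] using hH.posSemidef.dotProduct_mulVec_nonneg δ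
  rcases h with hδ0 | hγ0
  · have : 0 < H *ᵥ δ ⬝ᵥ δ := by simpa [dotProduct_comm] using hH.dotProduct_mulVec_pos hδ0
    linarith [Finset.sum_nonneg fun i (_ : i ∈ Finset.univ) => hγ i]
  · obtain ⟨i, hi⟩ := Function.ne_iff.mp hγ0
    have : 0 < γ i ⬝ᵥ γ i := (hγ i).lt_of_ne' (dotProduct_self_eq_zero.not.mpr hi)
    linarith [Finset.sum_pos' (fun i _ => hγ i) ⟨i, Finset.mem_univ i, this⟩]

end Real

end Matrix

section ProjectionObjective

variable {m ι : Type*} [Fintype m] [Fintype ι]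

noncomputable def projectionObjective (H : Matrix m m ℝ) (what : m → ℝ) (alphahat : ι → m → ℝ)
    (w : m → ℝ) (alpha : ι → m → ℝ) : ℝ :=
  (1 / 2) * (∑ i, (alpha i - alphahat i) ⬝ᵥ (alpha i - alphahat i)) +
    (1 / 2) * (H *ᵥ (w - what) ⬝ᵥ (w - what))

theorem projectionObjective_eq_add_of_optimality {H : Matrix m m ℝ}
    (hH : H.IsSymm) {j : ι} {what wstar w : m → ℝ} {alphahat alphastar alpha : ι → m → ℝ}
    (hai : ∀ i, i ≠ j → alphastar i = alphahat i)
    (haj : alphastar j - alphahat j = -(wstar - what))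
    (hcon : H *ᵥ (w - what) - alpha j = H *ᵥ (wstar - what) - alphastar j) :
    projectionObjective H what alphahat w alpha =
      projectionObjective H what alphahat wstar alphastar +
        (1 / 2) * (∑ i, (alpha i - alphastar i) ⬝ᵥ (alpha i - alphastar i) +
          H *ᵥ (w - wstar) ⬝ᵥ (w - wstar)) := by
  have hγj : alpha j - alphastar j = H *ᵥ (w - wstar) := by
    rw [← sub_sub_sub_cancel_right w wstar what, mulVec_sub]
    linear_combination -hcon
  have hcross : ∑ i, (alpha i - alphastar i) ⬝ᵥ (alphastar i - alphahat i) =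
      -(H *ᵥ (w - wstar) ⬝ᵥ (wstar - what)) := by
    rw [Finset.sum_eq_single j (fun i _ hij => by rw [hai i hij, sub_self, dotProduct_zero])
      (by simp), hγj, haj, dotProduct_neg]
  have hsplit : ∀ i, alpha i - alphahat i = (alpha i - alphastar i) + (alphastar i - alphahat i) :=
    fun i => (sub_add_sub_cancel _ _ _).symm
  unfold projectionObjective
  rw [← sub_add_sub_cancel w wstar what, hH.mulVec_add_dotProduct_add]
  simp only [hsplit]
  rw [sum_add_dotProduct_self_add, hcross]
  ring

end ProjectionObjective

/-- The SAN projection subproblem: minimizing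
`(1/2)∑ᵢ ‖αᵢ − α̂ᵢ‖² + (1/2)‖w − ŵ‖²_{H_j}` subject to `H_j(w − ŵ) − α_j = c_j`
has the unique solution `w = ŵ + (I + H_j)⁻¹(c_j + α̂_j)`,
`α_j = α̂_j − (I + H_j)⁻¹(c_j + α̂_j)`, and `α_i = α̂_i` for `i ≠ j`. -/
theorem SAN_projection_closed_form {d n : ℕ} (j : Fin n)
    (Hj : Matrix (Fin d) (Fin d) ℝ) (hHj : Hj.PosDef)
    (cj what : Fin d → ℝ) (alphahat : Fin n → Fin d → ℝ)
    (wstar : Fin d → ℝ) (alphastar : Fin n → Fin d → ℝ)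
    (hw : wstar = what + (1 + Hj)⁻¹.mulVec (cj + alphahat j))
    (haj : alphastar j = alphahat j - (1 + Hj)⁻¹.mulVec (cj + alphahat j))
    (hai : ∀ i : Fin n, i ≠ j → alphastar i = alphahat i) :
    (Hj.mulVec (wstar - what) - alphastar j = cj) ∧
      ∀ (w : Fin d → ℝ) (alpha : Fin n → Fin d → ℝ),
        Hj.mulVec (w - what) - alpha j = cj → (w, alpha) ≠ (wstar, alphastar) →
          (1 / 2) * (∑ i, (alphastar i - alphahat i) ⬝ᵥ (alphastar i - alphahat i)) +
            (1 / 2) * (Hj.mulVec (wstar - what) ⬝ᵥ (wstar - what)) <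
          (1 / 2) * (∑ i, (alpha i - alphahat i) ⬝ᵥ (alpha i - alphahat i)) +
            (1 / 2) * (Hj.mulVec (w - what) ⬝ᵥ (w - what)) := by
  have hunit : IsUnit (1 + Hj).det :=
    (isUnit_iff_isUnit_det _).mp (PosDef.posSemidef_add PosSemidef.one hHj).isUnit
  have hfeas : Hj *ᵥ (wstar - what) - alphastar j = cj := by
    rw [hw, haj, add_sub_cancel_left]
    exact mulVec_sub_sub_eq_of_isUnit_det_one_add hunit cj (alphahat j)
  refine ⟨hfeas, fun w alpha hcon hne => ?_⟩
  have hopt : alphastar j - alphahat j = -(wstar - what) := by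
    rw [hw, haj]
    abel
  have hsymm : Hj.IsSymm := isHermitian_iff_isSymm.mp hHj.isHermitian
  have hpos := sum_dotProduct_self_add_mulVec_dotProduct_pos hHj
    (γ := alpha - alphastar) (δ := w - wstar)
    (by simpa [Prod.ext_iff, sub_eq_zero, or_iff_not_imp_left] using hne)
  change projectionObjective Hj what alphahat wstar alphastar <
    projectionObjective Hj what alphahat w alpha
  rw [projectionObjective_eq_add_of_optimality hsymm hai hopt (hcon.trans hfeas.symm)]
  simp only [Pi.sub_apply] at hpos
  linarith
end

section
/- Let S_1, …, S_r be p×τ_i matrices, p_1, …, p_r > 0, and G_i symmetric positive definite p×p matrices. Define H = ∑_i p_i S_i (S_iᵀ G_i S_i)† S_iᵀ. If ∑_i p_i S_i S_iᵀ is invertible, then H is invertible. -/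
/-!
Write `Mᵢ = Sᵢᵀ Gᵢ Sᵢ`, `Nᵢ = Mᵢ†` and `Dᵢ = Sᵢ Nᵢ Sᵢᵀ`. Since `Nᵢ` is symmetric and
`Nᵢ Mᵢ Nᵢ = Nᵢ`, we have `Dᵢ = Dᵢᵀ Gᵢ Dᵢ`, so `Dᵢ` is positive semidefinite. For
`X = (1 - Mᵢ Nᵢ) Sᵢᵀ` we get `X Gᵢ Xᵀ = (1 - Mᵢ Nᵢ) Mᵢ (⋯) = 0`, so `X = 0` by definiteness of
`Gᵢ`, i.e. `Sᵢᵀ = Sᵢᵀ Gᵢ Dᵢ` and `ker Dᵢ ⊆ ker Sᵢᵀ`. A vector killed by `∑ pᵢ Dᵢ` is killed by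
every `Dᵢ` (a positive combination of semidefinite forms vanishes only if each does), hence by
every `Sᵢᵀ`, hence by the invertible `∑ pᵢ Sᵢ Sᵢᵀ`.
-/

open Matrix

namespace Matrix

variable {ι m n : Type*} [Fintype ι] [Fintype n]

theorem PosDef.eq_zero_of_mul_mul_transpose_eq_zero {G : Matrix n n ℝ} (hG : G.PosDef)
    {B : Matrix m n ℝ} (h : B * G * Bᵀ = 0) : B = 0 := by
  funext i
  by_contra hBi
  have hpos := hG.dotProduct_mulVec_pos hBi
  have hdiag : star (B i) ⬝ᵥ (G *ᵥ B i) = (B * G * Bᵀ) i i := by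
    simp only [star_trivial, dotProduct, mulVec, mul_apply, transpose_apply, Finset.mul_sum,
      Finset.sum_mul]
    rw [Finset.sum_comm]
    exact Fintype.sum_congr _ _ fun j ↦ Fintype.sum_congr _ _ fun k ↦ by ring
  rw [hdiag, h] at hpos
  exact lt_irrefl _ hpos

theorem mulVec_eq_zero_of_sum_smul_mulVec_eq_zero {A : ι → Matrix n n ℝ}
    (hA : ∀ i, (A i).PosSemidef) {c : ι → ℝ} (hc : ∀ i, 0 < c i) {x : n → ℝ}
    (hx : (∑ i, c i • A i) *ᵥ x = 0) (i : ι) : A i *ᵥ x = 0 := by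
  have hsum : ∑ j, c j * (star x ⬝ᵥ A j *ᵥ x) = 0 := by
    simpa [sum_mulVec, dotProduct_sum, smul_mulVec, dotProduct_smul] using
      congrArg (star x ⬝ᵥ ·) hx
  have hterm := (Finset.sum_eq_zero_iff_of_nonneg fun j _ ↦
    mul_nonneg (hc j).le ((hA j).dotProduct_mulVec_nonneg x)).mp hsum i (Finset.mem_univ i)
  exact ((hA i).dotProduct_mulVec_zero_iff x).mp <|
    (mul_eq_zero.mp hterm).resolve_left (hc i).ne'

theorem isUnit_sum_smul_of_ker_le [DecidableEq n] {A B : ι → Matrix n n ℝ}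
    (hA : ∀ i, (A i).PosSemidef) {c : ι → ℝ} (hc : ∀ i, 0 < c i)
    (hker : ∀ i x, A i *ᵥ x = 0 → B i *ᵥ x = 0) (hB : IsUnit (∑ i, c i • B i)) :
    IsUnit (∑ i, c i • A i) := by
  rw [← mulVec_injective_iff_isUnit, ← coe_mulVecLin, injective_iff_map_eq_zero] at hB ⊢
  simp only [mulVecLin_apply] at hB ⊢
  intro x hx
  refine hB x ?_
  simp only [sum_mulVec, smul_mulVec,
    hker _ x (mulVec_eq_zero_of_sum_smul_mulVec_eq_zero hA hc hx _), smul_zero,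
    Finset.sum_const_zero]

end Matrix

namespace IsMoorePenrose

section

variable {m n : ℕ} {M : Matrix (Fin m) (Fin n) ℝ} {N N₁ N₂ : Matrix (Fin n) (Fin m) ℝ}

theorem unique (h₁ : IsMoorePenrose M N₁) (h₂ : IsMoorePenrose M N₂) : N₁ = N₂ := by
  obtain ⟨a₁, b₁, c₁, d₁⟩ := h₁
  obtain ⟨a₂, b₂, c₂, d₂⟩ := h₂
  have hMN : M * N₁ = M * N₂ :=
    calc M * N₁ = M * N₂ * (M * N₁) := by rw [← Matrix.mul_assoc, a₂]
    _ = (M * N₁ * (M * N₂))ᵀ := by rw [transpose_mul, c₁, c₂]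
    _ = M * N₂ := by rw [← Matrix.mul_assoc, a₁, c₂]
  have hNM : N₁ * M = N₂ * M :=
    calc N₁ * M = N₁ * M * (N₂ * M) := by rw [Matrix.mul_assoc N₁, ← Matrix.mul_assoc M, a₂]
    _ = (N₂ * M * (N₁ * M))ᵀ := by rw [transpose_mul, d₁, d₂]
    _ = N₂ * M := by rw [Matrix.mul_assoc N₂, ← Matrix.mul_assoc M, a₁, d₂]
  calc N₁ = N₁ * M * N₁ := b₁.symm
  _ = N₂ * M * N₂ := by rw [hNM, Matrix.mul_assoc, hMN, ← Matrix.mul_assoc]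
  _ = N₂ := b₂

theorem transpose (h : IsMoorePenrose M N) : IsMoorePenrose Mᵀ Nᵀ := by
  obtain ⟨a, b, c, d⟩ := h
  refine ⟨?_, ?_, ?_, ?_⟩
  · rw [← transpose_mul, ← transpose_mul, ← Matrix.mul_assoc, a]
  · rw [← transpose_mul, ← transpose_mul, ← Matrix.mul_assoc, b]
  · rw [← transpose_mul, transpose_transpose, d]
  · rw [← transpose_mul, transpose_transpose, c]

end

theorem transpose_eq_self {n : ℕ} {M N : Matrix (Fin n) (Fin n) ℝ} (h : IsMoorePenrose M N)
    (hM : Mᵀ = M) : Nᵀ = N :=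
  (hM ▸ h.transpose).unique h

variable {p t : ℕ} {S : Matrix (Fin p) (Fin t) ℝ} {G : Matrix (Fin p) (Fin p) ℝ}
  {N : Matrix (Fin t) (Fin t) ℝ}

theorem gram_mul_transpose (hG : G.PosDef) (hN : IsMoorePenrose (Sᵀ * G * S) N) :
    Sᵀ * G * S * N * Sᵀ = Sᵀ := by
  set M := Sᵀ * G * S
  have hker : (1 - M * N) * M = 0 := by rw [Matrix.sub_mul, Matrix.one_mul, hN.1, sub_self]
  have hX : (1 - M * N) * Sᵀ * G * ((1 - M * N) * Sᵀ)ᵀ = 0 := by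
    rw [transpose_mul, transpose_transpose]
    calc (1 - M * N) * Sᵀ * G * (S * (1 - M * N)ᵀ) = (1 - M * N) * M * (1 - M * N)ᵀ := by
          simp only [M, Matrix.mul_assoc]
    _ = 0 := by rw [hker, Matrix.zero_mul]
  have := hG.eq_zero_of_mul_mul_transpose_eq_zero hX
  rwa [Matrix.sub_mul, Matrix.one_mul, sub_eq_zero, eq_comm] at this

theorem posSemidef_mul_mul_transpose (hG : G.PosDef) (hN : IsMoorePenrose (Sᵀ * G * S) N) :
    (S * N * Sᵀ).PosSemidef := by
  have hGt : Gᵀ = G := isHermitian_iff_isSymm.mp hG.isHermitian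
  have hNt : Nᵀ = N := hN.transpose_eq_self <| by
    simp only [transpose_mul, transpose_transpose, hGt, Matrix.mul_assoc]
  have hD : S * N * Sᵀ = (S * N * Sᵀ)ᴴ * G * (S * N * Sᵀ) := by
    rw [conjTranspose_eq_transpose_of_trivial]
    conv_lhs => rw [← hN.2.1]
    simp only [transpose_mul, transpose_transpose, hNt, Matrix.mul_assoc]
  rw [hD]
  exact hG.posSemidef.conjTranspose_mul_mul_same _

theorem transpose_mulVec_eq_zero (hG : G.PosDef) (hN : IsMoorePenrose (Sᵀ * G * S) N)
    {x : Fin p → ℝ} (hx : (S * N * Sᵀ) *ᵥ x = 0) : Sᵀ *ᵥ x = 0 := by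
  rw [← hN.gram_mul_transpose hG, show Sᵀ * G * S * N * Sᵀ = Sᵀ * G * (S * N * Sᵀ) by
    simp only [Matrix.mul_assoc], ← mulVec_mulVec, hx, mulVec_zero]

end IsMoorePenrose

/-- If `H = ∑ᵢ pᵢ Sᵢ (Sᵢᵀ Gᵢ Sᵢ)† Sᵢᵀ` with `pᵢ > 0`, each `Gᵢ` symmetric positive definite,
and `∑ᵢ pᵢ Sᵢ Sᵢᵀ` invertible, then `H` is invertible. -/
theorem H_invertible {p r : ℕ} (tau : Fin r → ℕ)
    (S : ∀ i : Fin r, Matrix (Fin p) (Fin (tau i)) ℝ)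
    (prob : Fin r → ℝ) (hprob : ∀ i, 0 < prob i)
    (G : Fin r → Matrix (Fin p) (Fin p) ℝ) (hG : ∀ i, (G i).PosDef)
    (N : ∀ i : Fin r, Matrix (Fin (tau i)) (Fin (tau i)) ℝ)
    (hN : ∀ i, IsMoorePenrose ((S i)ᵀ * G i * S i) (N i))
    (hSS : IsUnit (∑ i, prob i • (S i * (S i)ᵀ))) :
    IsUnit (∑ i, prob i • (S i * N i * (S i)ᵀ)) := by
  refine isUnit_sum_smul_of_ker_le (fun i ↦ (hN i).posSemidef_mul_mul_transpose (hG i)) hprob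
    (fun i x hx ↦ ?_) hSS
  rw [← mulVec_mulVec, (hN i).transpose_mulVec_eq_zero (hG i) hx, mulVec_zero]
end
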